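/- Let X be a Banach space, T a bounded linear operator on X with relatively weakly compact orbits, and A a bounded operator on X such that {A Tⁿ x : n ∈ ℕ} is relatively norm compact for every x ∈ X. Let K ⊆ X be relatively norm compact and suppose there exists a sequence (n_j) of density 1 in ℕ such that T^{n_j} y → 0 weakly for every y ∈ K. Then ‖A T^{n_j} y‖ → 0 as j → ∞ uniformly in y ∈ K, and consequently lim_{N→∞} (1/N) ∑_{n=1}^N ‖A Tⁿ y‖ = 0 for every y ∈ K. -/

import Mathlib

open Filter Topology

variable {X : Type*} [NormedAddCommGroup X] [NormedSpace ℂ X]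

/-- A set `M ⊆ ℕ` has density one if `|M ∩ {1,…,N}| / N → 1`. -/
def NatDensityOne (M : Set ℕ) : Prop :=
  Tendsto
    (fun N : ℕ => (∑ n ∈ Finset.Icc 1 N, Set.indicator M (fun _ => (1 : ℝ)) n) / N)
    atTop (nhds 1)

/-- An operator has relatively weakly compact orbits if every orbit `{Tⁿx : n ∈ ℕ}` is
relatively compact in the weak topology of `X`. -/
def RelWeaklyCompactOrbits (T : X →L[ℂ] X) : Prop :=
  ∀ x : X, IsCompact (closure (Set.range fun n : ℕ => toWeakSpace ℂ X ((T ^ n) x)))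

/-!
By Banach–Steinhaus, the relative compactness of every orbit `{A Tⁿ x}` makes the family
`(A Tⁿ)ₙ` equicontinuous. For `y ∈ K` the orbit `A Tⁿ y` lies in a compact set, where weak
convergence to `0` along `M` is norm convergence; equicontinuity then makes the convergence uniform
on the compact set `closure K`. The Cesàro means vanish because the orbit is bounded and the
complement of `M` has density zero.
-/

open Set

/-- A cluster point of `u` in `S` is weakly a limit of `u`, hence equals `z` because the dual
separates points. -/
theorem IsCompact.tendsto_of_tendsto_dual {𝕜 E ι : Type*} [Ring 𝕜] [TopologicalSpace 𝕜]
    [T2Space 𝕜] [AddCommGroup E] [TopologicalSpace E] [Module 𝕜 E] [SeparatingDual 𝕜 E]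
    {S : Set E} (hS : IsCompact S) {u : ι → E} {l : Filter ι} (hu : ∀ᶠ i in l, u i ∈ S) {z : E}
    (hweak : ∀ φ : StrongDual 𝕜 E, Tendsto (fun i => φ (u i)) l (𝓝 (φ z))) :
    Tendsto u l (𝓝 z) := by
  refine hS.tendsto_nhds_of_unique_mapClusterPt hu fun x _ hx => ?_
  refine (SeparatingDual.eq_iff_forall_dual_eq (R := 𝕜)).2 fun φ => eq_of_nhds_neBot ?_
  exact (hx.tendsto_comp (φ.continuous.tendsto x)).neBot.mono (inf_le_inf_left _ (hweak φ))

theorem Equicontinuous.tendstoUniformlyOn_of_isCompact_closure {ι Y α : Type*}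
    [TopologicalSpace Y] [UniformSpace α] {F : ι → Y → α} {f : Y → α} {l : Filter ι}
    {K : Set Y} (hF : Equicontinuous F) (hf : Continuous f) (hK : IsCompact (closure K))
    (hlim : ∀ y ∈ K, Tendsto (F · y) l (𝓝 (f y))) :
    TendstoUniformlyOn F f l K := by
  have hcl : ∀ y ∈ closure K, Tendsto (F · y) l (𝓝 (f y)) :=
    closure_minimal hlim (hF.isClosed_setOfPred_tendsto hf)
  have h := (EquicontinuousOn.tendsto_uniformOnFun_iff_pi' (𝔖 := {closure K}) (by simpa)
    (by simpa using hF.equicontinuousOn _) l f).2 ?_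
  · exact ((UniformOnFun.tendsto_iff_tendstoUniformlyOn.1 h) _ rfl).mono subset_closure
  · simpa [tendsto_pi_nhds] using fun y hy => hcl y hy

namespace NatDensityOne

variable {M : Set ℕ}

theorem tendsto_density_compl (hM : NatDensityOne M) :
    Tendsto (fun N : ℕ => (∑ n ∈ Finset.Icc 1 N, Mᶜ.indicator (fun _ => (1 : ℝ)) n) / N)
      atTop (𝓝 0) := by
  have h : Tendsto (fun N : ℕ =>
      1 - (∑ n ∈ Finset.Icc 1 N, M.indicator (fun _ => (1 : ℝ)) n) / N) atTop (𝓝 0) := by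
    simpa using (tendsto_const_nhds (x := (1 : ℝ))).sub hM
  refine h.congr' ?_
  filter_upwards [eventually_ne_atTop 0] with N hN
  simp [indicator_compl, Finset.sum_sub_distrib, sub_div, hN]

theorem tendsto_average_of_tendsto (hM : NatDensityOne M) {a : ℕ → ℝ} {C : ℝ}
    (hC : ∀ n, |a n| ≤ C) (ha : Tendsto a (atTop ⊓ 𝓟 M) (𝓝 0)) :
    Tendsto (fun N : ℕ => (∑ n ∈ Finset.Icc 1 N, a n) / N) atTop (𝓝 0) := by
  have hin : Tendsto (fun N : ℕ => (∑ n ∈ Finset.Icc 1 N, M.indicator a n) / N)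
      atTop (𝓝 0) := by
    have h : Tendsto (M.indicator a) atTop (𝓝 0) := by
      classical
      exact (ha.if (p := (· ∈ M)) tendsto_const_nhds).congr fun n => (indicator_apply ..).symm
    refine ((tendsto_add_atTop_iff_nat 1).2 h).cesaro.congr fun N => ?_
    rw [← Finset.Ico_add_one_right_eq_Icc, Finset.sum_Ico_eq_sum_range]
    simp [div_eq_inv_mul, add_comm]
  have hout : Tendsto (fun N : ℕ => (∑ n ∈ Finset.Icc 1 N, Mᶜ.indicator a n) / N)
      atTop (𝓝 0) := by
    refine squeeze_zero_norm (fun N => ?_) (by simpa using hM.tendsto_density_compl.const_mul C)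
    rw [norm_div, mul_div_assoc', Finset.mul_sum, Real.norm_natCast]
    gcongr
    refine (norm_sum_le _ _).trans (Finset.sum_le_sum fun n _ => ?_)
    by_cases hn : n ∈ M <;> simp [hn, hC n]
  have h := hin.add hout
  rw [add_zero] at h
  refine h.congr fun N => ?_
  simp only [← add_div, ← Finset.sum_add_distrib, indicator_self_add_compl_apply]

end NatDensityOne

theorem uniform_strong_convergence_on_compact_general
    [CompleteSpace X] (T A : X →L[ℂ] X)
    (hA : ∀ x : X, IsCompact (closure (Set.range fun n : ℕ => A ((T ^ n) x))))
    (K : Set X) (hK : IsCompact (closure K))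
    (M : Set ℕ) (hM : NatDensityOne M)
    (hweak : ∀ y ∈ K, ∀ φ : X →L[ℂ] ℂ,
      Tendsto (fun n : ℕ => φ ((T ^ n) y)) (atTop ⊓ 𝓟 M) (nhds 0)) :
    (∀ ε : ℝ, 0 < ε → ∃ N₀ : ℕ, ∀ n ∈ M, N₀ ≤ n → ∀ y ∈ K, ‖A ((T ^ n) y)‖ < ε) ∧
    (∀ y ∈ K,
      Tendsto (fun N : ℕ => (∑ n ∈ Finset.Icc 1 N, ‖A ((T ^ n) y)‖) / N) atTop (nhds 0)) := by
  have hpointwise : ∀ y ∈ K, Tendsto (fun n => A ((T ^ n) y)) (atTop ⊓ 𝓟 M) (𝓝 0) := by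
    refine fun y hy => (hA y).tendsto_of_tendsto_dual (𝕜 := ℂ)
      (Eventually.of_forall fun n => subset_closure (mem_range_self n)) fun φ => ?_
    rw [map_zero]
    exact hweak y hy (φ.comp A)
  have hequi : UniformEquicontinuous fun n (y : X) => A ((T ^ n) y) :=
    PolynormableSpace.banach_steinhaus (𝓕 := fun n : ℕ => A * T ^ n)
      fun x => ((hA x).isVonNBounded ℂ).subset subset_closure
  have huniform : TendstoUniformlyOn (fun n y => A ((T ^ n) y)) 0 (atTop ⊓ 𝓟 M) K :=
    hequi.equicontinuous.tendstoUniformlyOn_of_isCompact_closure continuous_const hK hpointwise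
  refine ⟨fun ε hε => ?_, fun y hy => ?_⟩
  · obtain ⟨N₀, hN₀⟩ := eventually_atTop.1
      (eventually_inf_principal.1 (Metric.tendstoUniformlyOn_iff.1 huniform ε hε))
    exact ⟨N₀, fun n hnM hn y hy => by simpa using hN₀ n hn hnM y hy⟩
  · obtain ⟨C, hC⟩ := (hA y).isBounded.exists_norm_le
    exact hM.tendsto_average_of_tendsto
      (fun n => by simpa using hC _ (subset_closure (mem_range_self n)))
      (by simpa using (hpointwise y hy).norm)

/-- Let `T` have relatively weakly compact orbits, let `A` be such that `{A Tⁿ x : n}` is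
relatively norm compact for every `x`, and let `K` be relatively norm compact.  If `Tⁿ y → 0`
weakly along a density-one set `M` for every `y ∈ K`, then `‖A Tⁿ y‖ → 0` along `M` uniformly
in `y ∈ K`, and consequently `(1/N) ∑_{n=1}^N ‖A Tⁿ y‖ → 0` for every `y ∈ K`. -/
theorem uniform_strong_convergence_on_compact
    [CompleteSpace X] (T A : X →L[ℂ] X) (hT : RelWeaklyCompactOrbits T)
    (hA : ∀ x : X, IsCompact (closure (Set.range fun n : ℕ => A ((T ^ n) x))))
    (K : Set X) (hK : IsCompact (closure K))
    (M : Set ℕ) (hM : NatDensityOne M)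
    (hweak : ∀ y ∈ K, ∀ φ : X →L[ℂ] ℂ,
      Tendsto (fun n : ℕ => φ ((T ^ n) y)) (atTop ⊓ 𝓟 M) (nhds 0)) :
    (∀ ε : ℝ, 0 < ε → ∃ N₀ : ℕ, ∀ n ∈ M, N₀ ≤ n → ∀ y ∈ K, ‖A ((T ^ n) y)‖ < ε) ∧
    (∀ y ∈ K,
      Tendsto (fun N : ℕ => (∑ n ∈ Finset.Icc 1 N, ‖A ((T ^ n) y)‖) / N) atTop (nhds 0)) :=
  uniform_strong_convergence_on_compact_general T A hA K hK M hM hweak
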